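/- arXiv:2208.13284 — 4 statements merged into one kernel-verified Lean document; each statement's English description precedes it below -/
import Mathlib

section
/- Let P be a finite set of points in the Euclidean plane with no three points collinear. Fix distinct points A, B ∈ P. Then the number of distinct values of the angle ∠ABC (with vertex B, one ray toward A), as C ranges over P \ {A, B}, is at least (|P| - 2) / 2. -/
/-!
Fix an orientation of the plane. The oriented angle `∡ A B C` determines the ray `BC`, so by
general position it is injective on `P \ {A, B}`; and the unoriented angle `∠ A B C` only
forgets its sign. Hence each value of `∠ A B ·` is taken at most twice.
-/

open EuclideanGeometry Finset Module

variable {V Pt : Type*} [NormedAddCommGroup V] [InnerProductSpace ℝ V] [MetricSpace Pt]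
  [NormedAddTorsor V Pt] [Fact (finrank ℝ V = 2)]

section Oriented

variable [Module.Oriented ℝ V (Fin 2)]

theorem EuclideanGeometry.collinear_of_oangle_eq {A B C₁ C₂ : Pt} (hAB : A ≠ B)
    (hC₁ : C₁ ≠ B) (hC₂ : C₂ ≠ B) (h : ∡ A B C₁ = ∡ A B C₂) :
    Collinear ℝ ({C₁, B, C₂} : Set Pt) := by
  have hzero : ∡ C₁ B C₂ = 0 := by rw [← oangle_sub_left hAB hC₁ hC₂, h, sub_self]
  exact oangle_eq_zero_or_eq_pi_iff_collinear.1 (Or.inl hzero)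

theorem EuclideanGeometry.injOn_oangle {A B : Pt} {S : Set Pt} (hAB : A ≠ B) (hBS : B ∉ S)
    (hS : S.Pairwise fun C₁ C₂ => ¬ Collinear ℝ ({C₁, B, C₂} : Set Pt)) :
    S.InjOn (∡ A B ·) := by
  intro C₁ h₁ C₂ h₂ h
  by_contra hne
  exact hS h₁ h₂ hne <| collinear_of_oangle_eq hAB (ne_of_mem_of_not_mem h₁ hBS)
    (ne_of_mem_of_not_mem h₂ hBS) h

end Oriented

theorem EuclideanGeometry.card_le_two_mul_card_image_angle {A B : Pt}
    (S : Finset Pt) (hAB : A ≠ B) (hBS : B ∉ S)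
    (hS : (S : Set Pt).Pairwise fun C₁ C₂ => ¬ Collinear ℝ ({C₁, B, C₂} : Set Pt)) :
    #S ≤ 2 * #(S.image (∠ A B ·)) := by
  classical
  have : FiniteDimensional ℝ V := .of_fact_finrank_eq_two
  let : Module.Oriented ℝ V (Fin 2) := ⟨(finBasisOfFinrankEq ℝ V Fact.out).orientation⟩
  refine card_le_mul_card_image S 2 fun α _ => ?_
  calc #{C ∈ S | ∠ A B C = α}
      ≤ #({(α : Real.Angle), -(α : Real.Angle)} : Finset Real.Angle) := by
        refine card_le_card_of_injOn (∡ A B ·) (fun C hC => ?_)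
          ((injOn_oangle hAB hBS hS).mono fun _ hC' => (mem_filter.1 hC').1)
        obtain ⟨hCS, rfl⟩ := mem_filter.1 hC
        simpa using oangle_eq_angle_or_eq_neg_angle hAB (ne_of_mem_of_not_mem hCS hBS)
    _ ≤ 2 := card_le_two

theorem stmt_1 [DecidableEq (EuclideanSpace ℝ (Fin 2))]
    (P : Finset (EuclideanSpace ℝ (Fin 2)))
    (hgp : ∀ a ∈ P, ∀ b ∈ P, ∀ c ∈ P, a ≠ b → a ≠ c → b ≠ c →
      ¬ Collinear ℝ ({a, b, c} : Set (EuclideanSpace ℝ (Fin 2))))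
    (A B : EuclideanSpace ℝ (Fin 2)) (hA : A ∈ P) (hB : B ∈ P) (hAB : A ≠ B) :
    ((P.card : ℝ) - 2) / 2 ≤
      (((P \ {A, B}).image (fun C => ∠ A B C)).card : ℝ) := by
  have : Fact (finrank ℝ (EuclideanSpace ℝ (Fin 2)) = 2) := ⟨finrank_euclideanSpace_fin⟩
  have hBS : B ∉ P \ {A, B} := by simp
  have hS : ((P \ {A, B} : Finset _) : Set _).Pairwise
      fun C₁ C₂ => ¬ Collinear ℝ ({C₁, B, C₂} : Set (EuclideanSpace ℝ (Fin 2))) := by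
    intro C₁ h₁ C₂ h₂ hne
    simp only [coe_sdiff, Set.mem_sdiff, mem_coe, coe_insert, coe_singleton, Set.mem_insert_iff,
      Set.mem_singleton_iff, not_or] at h₁ h₂
    exact hgp C₁ h₁.1 B hB C₂ h₂.1 h₁.2.2 hne (Ne.symm h₂.2.2)
  have hsub : ({A, B} : Finset _) ⊆ P := by simp [insert_subset_iff, hA, hB]
  have hcard : (#(P \ {A, B}) : ℝ) = #P - 2 := by
    have h2 : 2 ≤ #P := (card_pair hAB).ge.trans (card_le_card hsub)
    rw [card_sdiff_of_subset hsub, card_pair hAB, Nat.cast_sub h2, Nat.cast_two]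
  have hcount : (#(P \ {A, B}) : ℝ) ≤ 2 * #((P \ {A, B}).image (∠ A B ·)) := by
    exact_mod_cast card_le_two_mul_card_image_angle _ hAB hBS hS
  rw [div_le_iff₀ two_pos]
  linarith
end

section
/- Let P be a finite set of points in the Euclidean plane such that no three points of P are collinear and no four points of P are concyclic. Fix distinct points A, B ∈ P. Then the number of distinct values of the angle ∠ACB, as C ranges over P \ {A, B}, is at least (|P| - 2) / 2. -/
open EuclideanGeometry

theorem stmt_2 [DecidableEq (EuclideanSpace ℝ (Fin 2))]
    (P : Finset (EuclideanSpace ℝ (Fin 2)))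
    (hline : ∀ a ∈ P, ∀ b ∈ P, ∀ c ∈ P, a ≠ b → a ≠ c → b ≠ c →
      ¬ Collinear ℝ ({a, b, c} : Set (EuclideanSpace ℝ (Fin 2))))
    (hcircle : ∀ s : Finset (EuclideanSpace ℝ (Fin 2)), s ⊆ P → s.card = 4 →
      ¬ Concyclic (s : Set (EuclideanSpace ℝ (Fin 2))))
    (A B : EuclideanSpace ℝ (Fin 2)) (hA : A ∈ P) (hB : B ∈ P) (hAB : A ≠ B) :
    ((P.card : ℝ) - 2) / 2 ≤
      (((P \ {A, B}).image (fun C => ∠ A C B)).card : ℝ) := by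
  haveI : Fact (Module.finrank ℝ (EuclideanSpace ℝ (Fin 2)) = 2) :=
    ⟨finrank_euclideanSpace_fin⟩
  haveI : Module.Oriented ℝ (EuclideanSpace ℝ (Fin 2)) (Fin 2) :=
    ⟨(EuclideanSpace.basisFun (Fin 2) ℝ).toBasis.orientation⟩
  set s := P \ {A, B} with hs
  have hmem : ∀ c ∈ s, c ∈ P ∧ c ≠ A ∧ c ≠ B := by
    intro c hc
    simp only [hs, Finset.mem_sdiff, Finset.mem_insert, Finset.mem_singleton] at hc
    tauto
  -- No two distinct points of s give equal oriented angles
  have contra : ∀ c1 ∈ s, ∀ c2 ∈ s, c1 ≠ c2 → ∡ A c1 B ≠ ∡ A c2 B := by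
    intro c1 h1 c2 h2 h12 heq
    obtain ⟨h1P, h1A, h1B⟩ := hmem c1 h1
    obtain ⟨h2P, h2A, h2B⟩ := hmem c2 h2
    have h2z : (2 : ℤ) • ∡ A c1 B = (2 : ℤ) • ∡ A c2 B := by rw [heq]
    have hnc : ¬ Collinear ℝ ({A, c1, B} : Set (EuclideanSpace ℝ (Fin 2))) :=
      hline A hA c1 h1P B hB (Ne.symm h1A) hAB h1B
    have hconc : Concyclic ({A, c1, c2, B} : Set (EuclideanSpace ℝ (Fin 2))) :=
      concyclic_of_two_zsmul_oangle_eq_of_not_collinear h2z hnc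
    have hsub : ({A, c1, c2, B} : Finset (EuclideanSpace ℝ (Fin 2))) ⊆ P := by
      intro x hx
      simp only [Finset.mem_insert, Finset.mem_singleton] at hx
      rcases hx with rfl | rfl | rfl | rfl <;> assumption
    have hcard4 : ({A, c1, c2, B} : Finset (EuclideanSpace ℝ (Fin 2))).card = 4 := by
      rw [Finset.card_insert_of_notMem (by simp [Ne.symm h1A, Ne.symm h2A, hAB]),
        Finset.card_insert_of_notMem (by simp [h12, h1B]),
        Finset.card_insert_of_notMem (by simp [h2B]), Finset.card_singleton]
    exact hcircle _ hsub hcard4 (by simpa using hconc)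
  have key : s.card ≤ 2 * (s.image (fun C => ∠ A C B)).card := by
    apply Finset.card_le_mul_card_image
    intro θ _
    by_contra hgt
    push_neg at hgt
    obtain ⟨c1, h1, c2, h2, c3, h3, h12, h13, h23⟩ :=
      (Finset.two_lt_card (s := s.filter fun x => ∠ A x B = θ)).1 hgt
    simp only [Finset.mem_filter] at h1 h2 h3
    obtain ⟨h1s, hθ1⟩ := h1
    obtain ⟨h2s, hθ2⟩ := h2
    obtain ⟨h3s, hθ3⟩ := h3
    obtain ⟨_, h1A, h1B⟩ := hmem c1 h1s
    obtain ⟨_, h2A, h2B⟩ := hmem c2 h2s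
    obtain ⟨_, h3A, h3B⟩ := hmem c3 h3s
    have ho1 := oangle_eq_angle_or_eq_neg_angle (Ne.symm h1A) (Ne.symm h1B)
    have ho2 := oangle_eq_angle_or_eq_neg_angle (Ne.symm h2A) (Ne.symm h2B)
    have ho3 := oangle_eq_angle_or_eq_neg_angle (Ne.symm h3A) (Ne.symm h3B)
    rw [hθ1] at ho1
    rw [hθ2] at ho2
    rw [hθ3] at ho3
    rcases ho1 with e1 | e1 <;> rcases ho2 with e2 | e2 <;> rcases ho3 with e3 | e3 <;>
      first
      | exact contra c1 h1s c2 h2s h12 (e1.trans e2.symm)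
      | exact contra c1 h1s c3 h3s h13 (e1.trans e3.symm)
      | exact contra c2 h2s c3 h3s h23 (e2.trans e3.symm)
  have hcardP : 2 ≤ P.card := Finset.one_lt_card.2 ⟨A, hA, B, hB, hAB⟩
  have hscard : s.card = P.card - 2 := by
    rw [hs, Finset.card_sdiff_of_subset (by
      intro x hx
      simp only [Finset.mem_insert, Finset.mem_singleton] at hx
      rcases hx with rfl | rfl <;> assumption)]
    congr 1
    rw [Finset.card_insert_of_notMem (by simp [hAB]), Finset.card_singleton]
  rw [div_le_iff₀ (by norm_num : (0:ℝ) < 2)]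
  have := key
  rw [hscard] at this
  have hcast : ((P.card : ℝ) - 2) ≤ ((P.card - 2 : ℕ) : ℝ) := by
    rw [Nat.cast_sub hcardP]; norm_num
  calc (P.card : ℝ) - 2 ≤ ((P.card - 2 : ℕ) : ℝ) := hcast
    _ ≤ (2 * (s.image (fun C => ∠ A C B)).card : ℕ) := by exact_mod_cast this
    _ = ((s.image (fun C => ∠ A C B)).card : ℝ) * 2 := by push_cast; ring
end

section
/- In R^3, let A and B be distinct points and fix α ∈ (0, π/2) and β ∈ (0, π). Let S₁ = {C : ∠CBA = α} (a cone with vertex B and axis line AB) and S₂ = {C : ∠ACB = β, C ∉ line AB} (a surface of revolution about line AB). Then S₁ ∩ S₂ is contained in a single circle lying in a plane perpendicular to line AB. -/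
/-!
The triangle `ABC` is nondegenerate, so its angle at `A` is `π - α - β` and the law of sines
fixes `|BC| = |AB| sin (α + β) / sin β`. A point at distance `ℓ` from `B` on the cone of
half-angle `α` about the ray `BA` projects onto that ray at distance `ℓ cos α` from `B`, and
lies at distance `ℓ sin α` from the foot of this projection.
-/

open EuclideanGeometry Real
open scoped RealInnerProductSpace

namespace InnerProductGeometry

variable {V : Type*} [NormedAddCommGroup V] [InnerProductSpace ℝ V]

theorem inner_sub_smul_cos_angle_eq_zero (v u : V) :
    ⟪v - (‖v‖ * cos (angle v u) / ‖u‖) • u, u⟫ = 0 := by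
  rcases eq_or_ne u 0 with rfl | hu
  · simp
  have hu' : ‖u‖ ≠ 0 := norm_ne_zero_iff.mpr hu
  rw [inner_sub_left, real_inner_smul_left, real_inner_self_eq_norm_sq,
    ← cos_angle_mul_norm_mul_norm]
  field_simp
  ring

theorem norm_sub_smul_cos_angle (v u : V) :
    ‖v - (‖v‖ * cos (angle v u) / ‖u‖) • u‖ = ‖v‖ * sin (angle v u) := by
  rcases eq_or_ne u 0 with rfl | hu
  · simp
  have hu' : ‖u‖ ≠ 0 := norm_ne_zero_iff.mpr hu
  have hsq : ‖v - (‖v‖ * cos (angle v u) / ‖u‖) • u‖ ^ 2 = (‖v‖ * sin (angle v u)) ^ 2 := by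
    rw [norm_sub_sq_real, real_inner_smul_right, norm_smul, Real.norm_eq_abs, mul_pow, sq_abs,
      ← cos_angle_mul_norm_mul_norm, mul_pow _ (sin _), sin_sq]
    field_simp
    ring
  exact (sq_eq_sq₀ (norm_nonneg _) (mul_nonneg (norm_nonneg v) (sin_angle_nonneg v u))).mp hsq

end InnerProductGeometry

namespace EuclideanGeometry

variable {V P : Type*} [NormedAddCommGroup V] [InnerProductSpace ℝ V] [MetricSpace P]
  [NormedAddTorsor V P]

theorem dist_eq_dist_mul_sin_angle_add_angle_div_sin_angle {A B C : P}
    (h : ¬Collinear ℝ {B, C, A}) :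
    dist B C = dist A B * sin (∠ C B A + ∠ A C B) / sin (∠ A C B) := by
  have hBA : B ≠ A := by
    rintro rfl
    exact h (by simpa [Set.pair_comm] using collinear_pair ℝ B C)
  have hsum := angle_add_angle_add_angle_eq_pi C hBA
  rw [dist_eq_dist_mul_sin_angle_div_sin_angle h, dist_comm A B, angle_comm C B A,
    angle_comm A C B, ← sin_pi_sub]
  congr 3
  linarith

end EuclideanGeometry

theorem stmt_6_general (A B : EuclideanSpace ℝ (Fin 3)) (hAB : A ≠ B)
    (α : ℝ) (β : ℝ)
    (S₁ S₂ : Set (EuclideanSpace ℝ (Fin 3)))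
    (hS₁ : S₁ = {C | ∠ C B A = α})
    (hS₂ : S₂ = {C | ∠ A C B = β ∧ C ∉ line[ℝ, A, B]}) :
    ∃ (c : EuclideanSpace ℝ (Fin 3)) (r : ℝ),
      S₁ ∩ S₂ ⊆ Metric.sphere c r ∩ {X | inner ℝ (X - c) (B - A) = (0 : ℝ)} := by
  subst hS₁ hS₂
  set L := dist A B * sin (α + β) / sin β
  refine ⟨(L * cos α / ‖A - B‖) • (A - B) + B, L * sin α, ?_⟩
  rintro C ⟨hα, hβ, hCAB⟩
  have hncol : ¬Collinear ℝ {B, C, A} := fun h =>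
    hCAB (h.mem_affineSpan_of_mem_of_ne (by simp) (by simp) (by simp) hAB)
  have hL : ‖C - B‖ = L := by
    rw [← dist_eq_norm, dist_comm, dist_eq_dist_mul_sin_angle_add_angle_div_sin_angle hncol, hα,
      hβ]
  have hangle : InnerProductGeometry.angle (C - B) (A - B) = α := hα
  have hcenter : C - ((L * cos α / ‖A - B‖) • (A - B) + B) =
      C - B - (‖C - B‖ * cos (InnerProductGeometry.angle (C - B) (A - B)) / ‖A - B‖) • (A - B) := by
    rw [hL, hangle]
    abel
  constructor
  · rw [Metric.mem_sphere, dist_eq_norm, hcenter, InnerProductGeometry.norm_sub_smul_cos_angle,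
      hL, hangle]
  · rw [Set.mem_ofPred_eq, hcenter, ← neg_sub A B, inner_neg_right,
      InnerProductGeometry.inner_sub_smul_cos_angle_eq_zero, neg_zero]

theorem stmt_6 (A B : EuclideanSpace ℝ (Fin 3)) (hAB : A ≠ B)
    (α : ℝ) (hα : α ∈ Set.Ioo 0 (π / 2)) (β : ℝ) (hβ : β ∈ Set.Ioo 0 π)
    (S₁ S₂ : Set (EuclideanSpace ℝ (Fin 3)))
    (hS₁ : S₁ = {C | ∠ C B A = α})
    (hS₂ : S₂ = {C | ∠ A C B = β ∧ C ∉ line[ℝ, A, B]}) :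
    ∃ (c : EuclideanSpace ℝ (Fin 3)) (r : ℝ),
      S₁ ∩ S₂ ⊆ Metric.sphere c r ∩ {X | inner ℝ (X - c) (B - A) = (0 : ℝ)} :=
  stmt_6_general A B hAB α β S₁ S₂ hS₁ hS₂
end

section
/- Let P be a set of n ≥ 3 points in R^3 with no three points collinear and no four points concyclic, and fix A ∈ P. Then the number of distinct angle values ∠XYZ taken over ordered triples of distinct points of P in which A appears as one of the two endpoints (i.e., angles of the form ∠ABC or ∠BCA with B, C ∈ P \ {A}) is at least sqrt((n-2)/3). -/
/-!
Fix a second point `B`. For any further point `C`, the pair `(∠ABC, ∠ACB)` determines the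
triangle `ABC` up to congruence (angle–angle–side), hence both distances `|AC|` and `|BC|`.
The points sharing one pair therefore lie on two spheres centred at `A` and `B`, i.e. on a circle,
which holds at most three points of `P`. Both angles are among the counted values, so if there
are `t` of them, then `n - 2 ≤ 3 t²`.
-/

open EuclideanGeometry Module Finset

namespace EuclideanGeometry

variable {V Pt : Type*} [NormedAddCommGroup V] [InnerProductSpace ℝ V] [MetricSpace Pt]
  [NormedAddTorsor V Pt]

theorem dist_eq_dist_of_angle_eq_of_angle_eq {A B C₁ C₂ : Pt}
    (h : ¬ Collinear ℝ ({A, B, C₁} : Set Pt))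
    (hB : ∠ A B C₁ = ∠ A B C₂) (hC : ∠ A C₁ B = ∠ A C₂ B) :
    dist A C₁ = dist A C₂ ∧ dist B C₁ = dist B C₂ := by
  have h' : ¬ Collinear ℝ ({A, C₁, B} : Set Pt) := by rwa [Set.pair_comm]
  have hcong := angle_angle_side h' hC (by rwa [angle_comm, angle_comm C₂]) rfl
  exact ⟨hcong.dist_eq 0 1, by simpa [dist_comm] using hcong.dist_eq 1 2⟩

theorem vectorSpan_le_orthogonal_of_dist_eq {A B : Pt} {s : Set Pt} {rA rB : ℝ}
    (h : ∀ p ∈ s, dist p A = rA ∧ dist p B = rB) :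
    vectorSpan ℝ s ≤ (ℝ ∙ (B -ᵥ A))ᗮ := by
  rw [vectorSpan_def, Submodule.span_le]
  rintro _ ⟨p, hp, q, hq, rfl⟩
  exact Submodule.mem_orthogonal_singleton_iff_inner_right.2 <|
    inner_vsub_vsub_of_dist_eq_of_dist_eq ((h q hq).1.trans (h p hp).1.symm)
      ((h q hq).2.trans (h p hp).2.symm)

theorem concyclic_of_dist_eq (hV : finrank ℝ V = 3) {A B : Pt} (hAB : A ≠ B) {s : Set Pt}
    {rA rB : ℝ} (h : ∀ p ∈ s, dist p A = rA ∧ dist p B = rB) : Concyclic s := by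
  have : Fact (finrank ℝ V = 2 + 1) := ⟨hV⟩
  have : FiniteDimensional ℝ V := .of_fact_finrank_eq_succ 2
  refine ⟨⟨A, rA, fun p hp => (h p hp).1⟩, ?_⟩
  rw [coplanar_iff_finrank_le_two]
  exact (Submodule.finrank_mono (vectorSpan_le_orthogonal_of_dist_eq h)).trans
    (Submodule.finrank_orthogonal_span_singleton (vsub_ne_zero.2 hAB.symm)).le

theorem concyclic_of_angle_eq_of_angle_eq (hV : finrank ℝ V = 3) {A B : Pt} {s : Set Pt}
    {α β : ℝ}
    (h : ∀ C ∈ s, ¬ Collinear ℝ ({A, B, C} : Set Pt) ∧ ∠ A B C = α ∧ ∠ A C B = β) :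
    Concyclic s := by
  rcases s.eq_empty_or_nonempty with rfl | ⟨C₀, hC₀⟩
  · exact concyclic_empty
  obtain ⟨hcol₀, hα₀, hβ₀⟩ := h C₀ hC₀
  refine concyclic_of_dist_eq hV (ne₁₂_of_not_collinear hcol₀) (rA := dist C₀ A)
    (rB := dist C₀ B) fun C hC => ?_
  obtain ⟨hcol, hα, hβ⟩ := h C hC
  obtain ⟨hdA, hdB⟩ :=
    dist_eq_dist_of_angle_eq_of_angle_eq hcol (hα.trans hα₀.symm) (hβ.trans hβ₀.symm)
  rw [dist_comm C, dist_comm C, hdA, hdB, dist_comm A, dist_comm B]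
  exact ⟨rfl, rfl⟩

theorem card_filter_angles_eq_le_three [DecidableEq Pt] (hV : finrank ℝ V = 3) {P : Finset Pt}
    (hline : ∀ a ∈ P, ∀ b ∈ P, ∀ c ∈ P, a ≠ b → a ≠ c → b ≠ c →
      ¬ Collinear ℝ ({a, b, c} : Set Pt))
    (hcircle : ∀ s : Finset Pt, s ⊆ P → s.card = 4 → ¬ Concyclic (s : Set Pt))
    {A B : Pt} (hA : A ∈ P) (hB : B ∈ P) (hAB : A ≠ B) (θ : ℝ × ℝ) :
    #{C ∈ (P.erase A).erase B | (∠ A B C, ∠ A C B) = θ} ≤ 3 := by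
  by_contra! hgt
  obtain ⟨t, hts, htcard⟩ := exists_subset_card_eq (show 4 ≤ _ from hgt)
  have hmem : ∀ C ∈ t, (C ≠ B ∧ C ≠ A ∧ C ∈ P) ∧ (∠ A B C, ∠ A C B) = θ :=
    fun C hC => by simpa using hts hC
  refine hcircle t (fun C hC => (hmem C hC).1.2.2) htcard
    (concyclic_of_angle_eq_of_angle_eq hV (A := A) (B := B) (α := θ.1) (β := θ.2)
      fun C hC => ?_)
  obtain ⟨⟨hCB, hCA, hCP⟩, rfl⟩ := hmem C hC
  exact ⟨hline A hA B hB C hCP hAB hCA.symm hCB.symm, rfl, rfl⟩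

end EuclideanGeometry

theorem stmt_7 [DecidableEq (EuclideanSpace ℝ (Fin 3))]
    (n : ℕ) (hn : 3 ≤ n) (P : Finset (EuclideanSpace ℝ (Fin 3))) (hcard : P.card = n)
    (hline : ∀ a ∈ P, ∀ b ∈ P, ∀ c ∈ P, a ≠ b → a ≠ c → b ≠ c →
      ¬ Collinear ℝ ({a, b, c} : Set (EuclideanSpace ℝ (Fin 3))))
    (hcircle : ∀ s : Finset (EuclideanSpace ℝ (Fin 3)), s ⊆ P → s.card = 4 →
      ¬ Concyclic (s : Set (EuclideanSpace ℝ (Fin 3))))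
    (A : EuclideanSpace ℝ (Fin 3)) (hA : A ∈ P) :
    Real.sqrt (((n : ℝ) - 2) / 3) ≤
      (((((P \ {A}) ×ˢ (P \ {A})).filter (fun pr => pr.1 ≠ pr.2)).image
          (fun pr => ∠ A pr.1 pr.2)).card : ℝ) := by
  set T := (((P \ {A}) ×ˢ (P \ {A})).filter (fun pr => pr.1 ≠ pr.2)).image
    (fun pr => ∠ A pr.1 pr.2)
  have hT : ∀ X ∈ P, ∀ Y ∈ P, X ≠ A → Y ≠ A → X ≠ Y → ∠ A X Y ∈ T :=
    fun X hX Y hY hXA hYA hXY => mem_image.2 ⟨(X, Y), by simp [hX, hY, hXA, hYA, hXY], rfl⟩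
  obtain ⟨B, hB⟩ : (P.erase A).Nonempty := by
    rw [← card_pos, card_erase_of_mem hA]; omega
  obtain ⟨hBA, hBP⟩ := mem_erase.1 hB
  have hmaps : ∀ C ∈ (P.erase A).erase B, (∠ A B C, ∠ A C B) ∈ T ×ˢ T := by
    intro C hC
    obtain ⟨hCB, hCA, hCP⟩ : C ≠ B ∧ C ≠ A ∧ C ∈ P := by simpa using hC
    exact mem_product.2 ⟨hT B hBP C hCP hBA hCA hCB.symm, hT C hCP B hBP hCA hBA hCB⟩
  have hcount : n - 2 ≤ 3 * T.card ^ 2 := by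
    have := card_le_mul_card_image_of_maps_to hmaps 3 fun θ _ =>
      card_filter_angles_eq_le_three finrank_euclideanSpace_fin hline hcircle hA hBP hBA.symm θ
    rwa [card_erase_of_mem hB, card_erase_of_mem hA, hcard, card_product, ← sq] at this
  refine Real.sqrt_le_iff.2 ⟨by positivity, ?_⟩
  have : ((n - 2 : ℕ) : ℝ) ≤ 3 * (T.card : ℝ) ^ 2 := by exact_mod_cast hcount
  rw [Nat.cast_sub (by omega)] at this
  push_cast at this
  linarith
end
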